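/- arXiv:1801.01797 — 4 statements merged into one kernel-verified Lean document; each statement's English description precedes it below -/
import Mathlib

section
/- Closed form of the OLS integration estimator: if the m columns of H⁽ⁿ⁾ = (h_j(X_i))_{i,j} are linearly independent and 1_n is not in the column space of H⁽ⁿ⁾, then (f⁽ⁿ⁾)'(I_n − Π)1_n / (1_n'(I_n − Π)1_n) = (P_n(f) − P_n(fh') P_n(hh')^{-1} P_n(h)) / (1 − P_n(h') P_n(hh')^{-1} P_n(h)), where P_n denotes the empirical measure of X_1,...,X_n and Π = n^{-1} H⁽ⁿ⁾ P_n(hh')^{-1} (H⁽ⁿ⁾)'. -/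
open MeasureTheory Matrix

/-- Closed form of the OLS integration estimator: with `Π = n⁻¹ H G⁻¹ Hᵀ` and
`G = P_n(hh')`, if the columns of `H` are linearly independent and `1_n` is not in the
column space, then `f'(I−Π)1 / 1'(I−Π)1` equals
`(P_n(f) − P_n(fh') G⁻¹ P_n(h)) / (1 − P_n(h') G⁻¹ P_n(h))`. -/
theorem stmt4 {n m : ℕ} (hn : 0 < n) {S : Type*} (X : Fin n → S)
    (f : S → ℝ) (h : Fin m → S → ℝ)
    (H : Matrix (Fin n) (Fin m) ℝ) (hH : ∀ i j, H i j = h j (X i))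
    (hli : LinearIndependent ℝ fun j : Fin m => (fun i => H i j : Fin n → ℝ))
    (hone : (fun _ : Fin n => (1 : ℝ)) ∉
      Submodule.span ℝ (Set.range fun j : Fin m => (fun i => H i j : Fin n → ℝ)))
    (G : Matrix (Fin m) (Fin m) ℝ) (hG : G = (n : ℝ)⁻¹ • (Hᵀ * H)) (hGdet : IsUnit G.det)
    (Pr : Matrix (Fin n) (Fin n) ℝ) (hPr : Pr = (n : ℝ)⁻¹ • (H * G⁻¹ * Hᵀ)) :
    let fvec : Fin n → ℝ := fun i => f (X i)
    let ones : Fin n → ℝ := fun _ => 1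
    let Pnf : ℝ := (n : ℝ)⁻¹ * ∑ i, f (X i)
    let Pnh : Fin m → ℝ := fun j => (n : ℝ)⁻¹ * ∑ i, h j (X i)
    let Pnfh : Fin m → ℝ := fun j => (n : ℝ)⁻¹ * ∑ i, f (X i) * h j (X i)
    fvec ⬝ᵥ ((1 - Pr) *ᵥ ones) / (ones ⬝ᵥ ((1 - Pr) *ᵥ ones)) =
      (Pnf - Pnfh ⬝ᵥ (G⁻¹ *ᵥ Pnh)) / (1 - Pnh ⬝ᵥ (G⁻¹ *ᵥ Pnh)) := by
  have hn' : (n : ℝ) ≠ 0 := Nat.cast_ne_zero.mpr hn.ne'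
  intro fvec ones Pnf Pnh Pnfh
  have hones : ones = (1 : Fin n → ℝ) := rfl
  have hPnh : Pnh = (n:ℝ)⁻¹ • (Hᵀ *ᵥ ones) := by
    funext j
    simp [Pnh, mulVec, dotProduct, hH, ones]
  have hPnfh : Pnfh = (n:ℝ)⁻¹ • (Hᵀ *ᵥ fvec) := by
    funext j
    simp [Pnfh, mulVec, dotProduct, hH, fvec, mul_comm]
  have key : ∀ v : Fin n → ℝ, v ⬝ᵥ ((1 - Pr) *ᵥ ones)
      = (n:ℝ) * (((n:ℝ)⁻¹ * ∑ i, v i)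
          - ((n:ℝ)⁻¹ • (Hᵀ *ᵥ v)) ⬝ᵥ (G⁻¹ *ᵥ ((n:ℝ)⁻¹ • (Hᵀ *ᵥ ones)))) := by
    intro v
    rw [hPr, sub_mulVec, one_mulVec, dotProduct_sub]
    rw [smul_mulVec, dotProduct_smul]
    rw [Matrix.mul_assoc, ← Matrix.mulVec_mulVec, ← Matrix.mulVec_mulVec]
    rw [dotProduct_mulVec v H, ← Matrix.mulVec_transpose]
    rw [hones, dotProduct_one]
    rw [mulVec_smul, dotProduct_smul, smul_dotProduct]
    push_cast
    simp only [smul_eq_mul]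
    field_simp
  have hfv : ∑ i, fvec i = ∑ i, f (X i) := rfl
  rw [key fvec, key ones, hfv, ← hPnh, ← hPnfh]
  have hsum1 : ((n:ℝ)⁻¹ * ∑ i, ones i) = 1 := by
    simp [ones]
    exact inv_mul_cancel₀ hn'
  rw [hsum1]
  exact mul_div_mul_left _ _ hn'
end

section
/- Variance estimator identity (equation for σ̂²): if P_n(hh') is invertible and P_n(h') P_n(hh')^{-1} P_n(h) < 1, then n^{-1}(f⁽ⁿ⁾ − μ̂ 1_n)'(I_n − Π)(f⁽ⁿ⁾ − μ̂ 1_n) = P_n(ε²) − P_n(εh') P_n(hh')^{-1} P_n(hε) − (μ̂ − μ)² (1 − P_n(h') P_n(hh')^{-1} P_n(h)), where μ̂ is the OLSMC estimator, f = μ + β_opt'h + ε, and Π is the projection onto the column space of H⁽ⁿ⁾. -/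
open MeasureTheory Matrix

/-- Variance estimator identity: if `P_n(hh')` is invertible and
`P_n(h') P_n(hh')⁻¹ P_n(h) < 1`, then
`n⁻¹ (f − μ̂1)'(I−Π)(f − μ̂1) = P_n(ε²) − P_n(εh') P_n(hh')⁻¹ P_n(hε)
  − (μ̂ − μ)² (1 − P_n(h') P_n(hh')⁻¹ P_n(h))`. -/
theorem stmt5 {n m : ℕ} (hn : 0 < n)
    (μ : ℝ) (β : Fin m → ℝ) (H : Matrix (Fin n) (Fin m) ℝ) (εv : Fin n → ℝ)
    (fvec : Fin n → ℝ) (hfvec : ∀ i, fvec i = μ + (H *ᵥ β) i + εv i)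
    (G : Matrix (Fin m) (Fin m) ℝ) (hG : G = (n : ℝ)⁻¹ • (Hᵀ * H)) (hGdet : IsUnit G.det)
    (Pr : Matrix (Fin n) (Fin n) ℝ) (hPr : Pr = (n : ℝ)⁻¹ • (H * G⁻¹ * Hᵀ))
    (Pnh : Fin m → ℝ) (hPnh : ∀ j, Pnh j = (n : ℝ)⁻¹ * ∑ i, H i j)
    (Pnhε : Fin m → ℝ) (hPnhε : ∀ j, Pnhε j = (n : ℝ)⁻¹ * ∑ i, H i j * εv i)
    (hden : Pnh ⬝ᵥ (G⁻¹ *ᵥ Pnh) < 1)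
    (μhat : ℝ)
    (hμhat : μhat =
      ((n : ℝ)⁻¹ * ∑ i, fvec i -
          (fun j => (n : ℝ)⁻¹ * ∑ i, fvec i * H i j) ⬝ᵥ (G⁻¹ *ᵥ Pnh)) /
        (1 - Pnh ⬝ᵥ (G⁻¹ *ᵥ Pnh))) :
    (n : ℝ)⁻¹ *
        ((fvec - μhat • fun _ : Fin n => (1 : ℝ)) ⬝ᵥ
          ((1 - Pr) *ᵥ (fvec - μhat • fun _ : Fin n => (1 : ℝ)))) =
      (n : ℝ)⁻¹ * (∑ i, εv i ^ 2) - Pnhε ⬝ᵥ (G⁻¹ *ᵥ Pnhε) -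
        (μhat - μ) ^ 2 * (1 - Pnh ⬝ᵥ (G⁻¹ *ᵥ Pnh)) := by
  have hn0 : (n : ℝ) ≠ 0 := Nat.cast_ne_zero.mpr hn.ne'
  have hGsymm : Gᵀ = G := by rw [hG]; simp [Matrix.transpose_smul, Matrix.transpose_mul]
  have hGinvsymm : (G⁻¹)ᵀ = G⁻¹ := by
    rw [Matrix.transpose_nonsing_inv, hGsymm]
  have hsym : ∀ x y : Fin m → ℝ, x ⬝ᵥ (G⁻¹ *ᵥ y) = y ⬝ᵥ (G⁻¹ *ᵥ x) := by
    intro x y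
    conv_lhs => rw [Matrix.dotProduct_mulVec, ← hGinvsymm, Matrix.vecMul_transpose]
    exact dotProduct_comm _ _
  have hinv : ∀ v : Fin m → ℝ, G⁻¹ *ᵥ (G *ᵥ v) = v := by
    intro v
    rw [Matrix.mulVec_mulVec, Matrix.nonsing_inv_mul G hGdet, Matrix.one_mulVec]
  have hHtH : Hᵀ * H = (n : ℝ) • G := by
    rw [hG, smul_smul, mul_inv_cancel₀ hn0, one_smul]
  have hHt1 : Hᵀ *ᵥ (fun _ : Fin n => (1:ℝ)) = (n : ℝ) • Pnh := by
    funext j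
    simp only [Matrix.mulVec, dotProduct, Matrix.transpose_apply, mul_one, Pi.smul_apply,
      smul_eq_mul, hPnh]
    field_simp
  have hHtε : Hᵀ *ᵥ εv = (n : ℝ) • Pnhε := by
    funext j
    simp only [Matrix.mulVec, dotProduct, Matrix.transpose_apply, Pi.smul_apply,
      smul_eq_mul, hPnhε]
    field_simp
  set onev : Fin n → ℝ := fun _ => 1 with honev
  set e := μhat - μ with he
  set q := Pnh ⬝ᵥ (G⁻¹ *ᵥ Pnh) with hq
  set r := Pnh ⬝ᵥ (G⁻¹ *ᵥ Pnhε) with hr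
  set s := Pnhε ⬝ᵥ (G⁻¹ *ᵥ Pnhε) with hs
  set t := Pnh ⬝ᵥ β with ht
  set B := β ⬝ᵥ (G *ᵥ β) with hB
  set c := Pnhε ⬝ᵥ β with hc
  set S := ∑ i, εv i with hS
  have hg : fvec - μhat • onev = (-e) • onev + (H *ᵥ β + εv) := by
    funext i
    simp only [Pi.sub_apply, Pi.smul_apply, Pi.add_apply, smul_eq_mul, honev, hfvec i, he]
    ring
  -- dot product values
  have d11 : onev ⬝ᵥ onev = (n : ℝ) := by simp [dotProduct, honev]
  have d1H : onev ⬝ᵥ (H *ᵥ β) = (n : ℝ) * t := by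
    rw [Matrix.dotProduct_mulVec, ← Matrix.mulVec_transpose, hHt1, smul_dotProduct,
      smul_eq_mul, ht]
  have d1ε : onev ⬝ᵥ εv = S := by simp [dotProduct, honev, hS]
  have dHH : (H *ᵥ β) ⬝ᵥ (H *ᵥ β) = (n : ℝ) * B := by
    rw [Matrix.dotProduct_mulVec, ← Matrix.mulVec_transpose, Matrix.mulVec_mulVec, hHtH,
      Matrix.smul_mulVec, smul_dotProduct, smul_eq_mul, dotProduct_comm, hB]
  have dHε : (H *ᵥ β) ⬝ᵥ εv = (n : ℝ) * c := by
    rw [dotProduct_comm, Matrix.dotProduct_mulVec, ← Matrix.mulVec_transpose, hHtε,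
      smul_dotProduct, smul_eq_mul, hc]
  have dεε : εv ⬝ᵥ εv = ∑ i, εv i ^ 2 := by
    simp [dotProduct, sq]
  -- g ⬝ᵥ g
  have hgg : (fvec - μhat • onev) ⬝ᵥ (fvec - μhat • onev) =
      (n : ℝ) * e ^ 2 - 2 * e * ((n : ℝ) * t) - 2 * e * S + (n : ℝ) * B +
        2 * ((n : ℝ) * c) + ∑ i, εv i ^ 2 := by
    rw [hg]
    simp only [dotProduct_add, add_dotProduct, smul_dotProduct, dotProduct_smul, smul_eq_mul]
    rw [d11, d1H, d1ε, dHH, dHε, dεε, dotProduct_comm (H *ᵥ β) onev, d1H,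
      dotProduct_comm εv onev, d1ε, dotProduct_comm εv (H *ᵥ β), dHε]
    ring
  -- Hᵀ *ᵥ g
  have hHtg : Hᵀ *ᵥ (fvec - μhat • onev) = (n : ℝ) • ((-e) • Pnh + (G *ᵥ β + Pnhε)) := by
    rw [hg, Matrix.mulVec_add, Matrix.mulVec_add, Matrix.mulVec_smul, hHt1, hHtε,
      Matrix.mulVec_mulVec, hHtH, Matrix.smul_mulVec]
    module
  set w : Fin m → ℝ := (-e) • Pnh + (G *ᵥ β + Pnhε) with hw
  have hww : w ⬝ᵥ (G⁻¹ *ᵥ w) = e ^ 2 * q - 2 * e * t - 2 * e * r + B + 2 * c + s := by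
    rw [hw]
    simp only [Matrix.mulVec_add, Matrix.mulVec_smul, dotProduct_add, add_dotProduct,
      smul_dotProduct, dotProduct_smul, smul_eq_mul]
    rw [hsym (G *ᵥ β) Pnh, hsym (G *ᵥ β) Pnhε, hsym Pnhε Pnh]
    rw [hinv β, dotProduct_comm (G *ᵥ β) β,
      ← ht, ← hB, ← hc, ← hq, ← hr, ← hs]
    ring
  have hquad : (fvec - μhat • onev) ⬝ᵥ (Pr *ᵥ (fvec - μhat • onev)) =
      (n : ℝ) * (w ⬝ᵥ (G⁻¹ *ᵥ w)) := by
    rw [hPr, Matrix.smul_mulVec, dotProduct_smul, ← Matrix.mulVec_mulVec,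
      ← Matrix.mulVec_mulVec, Matrix.dotProduct_mulVec, ← Matrix.mulVec_transpose, hHtg,
      Matrix.mulVec_smul, dotProduct_smul, smul_dotProduct]
    simp only [smul_eq_mul]
    field_simp
  have hone : (1 : ℝ) - q ≠ 0 := ne_of_gt (sub_pos.mpr hden)
  have hfv : fvec = μ • onev + (H *ᵥ β + εv) := by
    funext i
    simp only [Pi.add_apply, Pi.smul_apply, smul_eq_mul, honev, hfvec i]
    ring
  have hHtf : Hᵀ *ᵥ fvec = (n : ℝ) • (μ • Pnh + (G *ᵥ β + Pnhε)) := by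
    rw [hfv, Matrix.mulVec_add, Matrix.mulVec_add, Matrix.mulVec_smul, hHt1, hHtε,
      Matrix.mulVec_mulVec, hHtH, Matrix.smul_mulVec]
    module
  have hvf : (fun j => (n : ℝ)⁻¹ * ∑ i, fvec i * H i j) = μ • Pnh + (G *ᵥ β + Pnhε) := by
    funext j
    have h2 : ∑ i, fvec i * H i j = (Hᵀ *ᵥ fvec) j := by
      simp [Matrix.mulVec, dotProduct, Matrix.transpose_apply, mul_comm]
    rw [h2, hHtf, Pi.smul_apply, smul_eq_mul, inv_mul_cancel_left₀ hn0]
  have hSf : ∑ i, fvec i = (n : ℝ) * μ + (n : ℝ) * t + S := by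
    have h3 : ∑ i, fvec i = onev ⬝ᵥ fvec := by simp [dotProduct, honev]
    rw [h3, hfv]
    simp only [dotProduct_add, dotProduct_smul, smul_eq_mul]
    rw [d11, d1H, d1ε]
    ring
  have hPnf : (n : ℝ)⁻¹ * ∑ i, fvec i = μ + t + (n : ℝ)⁻¹ * S := by
    rw [hSf]; field_simp
  have hkey : e * (1 - q) = (n : ℝ)⁻¹ * S - r := by
    have h1 : μhat * (1 - q) = (n : ℝ)⁻¹ * ∑ i, fvec i -
        (fun j => (n : ℝ)⁻¹ * ∑ i, fvec i * H i j) ⬝ᵥ (G⁻¹ *ᵥ Pnh) := by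
      rw [hμhat, div_mul_cancel₀ _ hone]
    rw [hvf, hPnf] at h1
    simp only [add_dotProduct, smul_dotProduct, smul_eq_mul] at h1
    rw [hsym (G *ᵥ β) Pnh, hinv β, hsym Pnhε Pnh, ← hq, ← hr] at h1
    rw [← ht] at h1
    rw [he]
    linear_combination h1
  have hkey2 : (n : ℝ) * (e * (1 - q)) = S - (n : ℝ) * r := by
    rw [hkey]; field_simp
  rw [Matrix.sub_mulVec, Matrix.one_mulVec, dotProduct_sub, hgg, hquad, hww]
  field_simp
  linear_combination (2 * e) * hkey2
end

section
/- The variance estimator is bounded by the empirical error variance: under the conditions of the previous identity, σ̂² := n^{-1}(f⁽ⁿ⁾ − μ̂ 1_n)'(I_n − Π)(f⁽ⁿ⁾ − μ̂ 1_n) ≤ P_n(ε²); consequently, when X_1,...,X_n are iid from P and ε has mean zero under P, the estimator σ̂² has nonpositive bias: E[σ̂²] ≤ P(ε²). -/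
/-!
Let `M = 1 - Π` and let `𝟙` be the all-ones vector. The estimator `μ̂` is the least-squares
intercept: `c ↦ (f - c 𝟙)ᵀ M (f - c 𝟙)` is a quadratic with leading coefficient
`𝟙ᵀ M 𝟙 = n (1 - P_n(h)ᵀ P_n(hhᵀ)⁻¹ P_n(h)) > 0`, minimised exactly at `μ̂`. Its value at the true
intercept `μ` is `εᵀ M ε`, because `M` annihilates the columns of the design matrix, and
`εᵀ M ε ≤ εᵀ ε` because `Π` is an orthogonal projection. Hence `σ̂² ≤ P_n(ε²)` pointwise, and
taking expectations gives `E[σ̂²] ≤ P(ε²)` since every `X_i` has law `P`.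
-/

open MeasureTheory Matrix

theorem Matrix.IsSymm.dotProduct_mulVec_comm {ι : Type*} [Fintype ι] {M : Matrix ι ι ℝ}
    (hM : M.IsSymm) (x y : ι → ℝ) : x ⬝ᵥ (M *ᵥ y) = y ⬝ᵥ (M *ᵥ x) := by
  rw [dotProduct_mulVec, ← mulVec_transpose, hM.eq, dotProduct_comm]

theorem dotProduct_sub_smul_mulVec_sub_smul_le {ι : Type*} [Fintype ι] {M : Matrix ι ι ℝ}
    (hM : M.IsSymm) {x u : ι → ℝ} {c : ℝ} (hA : 0 ≤ u ⬝ᵥ (M *ᵥ u))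
    (hc : c * (u ⬝ᵥ (M *ᵥ u)) = u ⬝ᵥ (M *ᵥ x)) (a : ℝ) :
    (x - c • u) ⬝ᵥ (M *ᵥ (x - c • u)) ≤ (x - a • u) ⬝ᵥ (M *ᵥ (x - a • u)) := by
  have expand : ∀ t : ℝ, (x - t • u) ⬝ᵥ (M *ᵥ (x - t • u)) =
      x ⬝ᵥ (M *ᵥ x) - 2 * t * (u ⬝ᵥ (M *ᵥ x)) + t ^ 2 * (u ⬝ᵥ (M *ᵥ u)) := by
    intro t
    simp only [mulVec_sub, mulVec_smul, sub_dotProduct, dotProduct_sub, smul_dotProduct,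
      dotProduct_smul, smul_eq_mul, hM.dotProduct_mulVec_comm x u]
    ring
  rw [expand, expand, ← hc]
  nlinarith [mul_nonneg hA (sq_nonneg (a - c))]

section HatMatrix

variable {ι κ : Type*} [Fintype ι] [Fintype κ] [DecidableEq κ]

noncomputable def hatMatrix (H : Matrix ι κ ℝ) : Matrix ι ι ℝ := H * (Hᵀ * H)⁻¹ * Hᵀ

theorem isSymm_hatMatrix (H : Matrix ι κ ℝ) : (hatMatrix H).IsSymm := by
  simp [IsSymm, hatMatrix, transpose_mul, transpose_nonsing_inv, Matrix.mul_assoc]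

theorem dotProduct_hatMatrix_mulVec (H : Matrix ι κ ℝ) (x y : ι → ℝ) :
    x ⬝ᵥ (hatMatrix H *ᵥ y) = (Hᵀ *ᵥ x) ⬝ᵥ ((Hᵀ * H)⁻¹ *ᵥ (Hᵀ *ᵥ y)) := by
  rw [hatMatrix, ← mulVec_mulVec, ← mulVec_mulVec, dotProduct_mulVec]
  simp only [mulVec_transpose]

variable {H : Matrix ι κ ℝ}

theorem hatMatrix_mul_self (hH : IsUnit (Hᵀ * H).det) : hatMatrix H * H = H := by
  rw [hatMatrix, Matrix.mul_assoc, nonsing_inv_mul_cancel_right _ _ hH]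

theorem hatMatrix_mul_hatMatrix (hH : IsUnit (Hᵀ * H).det) :
    hatMatrix H * hatMatrix H = hatMatrix H :=
  calc hatMatrix H * hatMatrix H = hatMatrix H * H * (Hᵀ * H)⁻¹ * Hᵀ := by
        simp only [hatMatrix, Matrix.mul_assoc]
    _ = hatMatrix H := by rw [hatMatrix_mul_self hH, hatMatrix]

theorem dotProduct_hatMatrix_mulVec_self_nonneg (hH : IsUnit (Hᵀ * H).det) (x : ι → ℝ) :
    0 ≤ x ⬝ᵥ (hatMatrix H *ᵥ x) := by
  rw [← hatMatrix_mul_hatMatrix hH, ← mulVec_mulVec, (isSymm_hatMatrix H).dotProduct_mulVec_comm]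
  exact Finset.sum_nonneg fun i _ => mul_self_nonneg _

variable [DecidableEq ι]

theorem one_sub_hatMatrix_mulVec_mulVec (hH : IsUnit (Hᵀ * H).det) (β : κ → ℝ) :
    (1 - hatMatrix H) *ᵥ (H *ᵥ β) = 0 := by
  rw [mulVec_mulVec, Matrix.sub_mul, hatMatrix_mul_self hH, Matrix.one_mul, sub_self,
    zero_mulVec]

theorem dotProduct_one_sub_hatMatrix_mulVec_self_le (hH : IsUnit (Hᵀ * H).det) (x : ι → ℝ) :
    x ⬝ᵥ ((1 - hatMatrix H) *ᵥ x) ≤ x ⬝ᵥ x := by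
  rw [sub_mulVec, one_mulVec, dotProduct_sub]
  linarith [dotProduct_hatMatrix_mulVec_self_nonneg hH x]

end HatMatrix

section Intercept

variable {n m : ℕ} {H : Matrix (Fin n) (Fin m) ℝ} {G : Matrix (Fin m) (Fin m) ℝ}

theorem transpose_mul_self_eq_smul (hn : n ≠ 0) (hG : G = (n : ℝ)⁻¹ • (Hᵀ * H)) :
    Hᵀ * H = (n : ℝ) • G := by
  rw [hG, smul_smul, mul_inv_cancel₀ (Nat.cast_ne_zero.2 hn), one_smul]

theorem inv_transpose_mul_self_eq (hn : n ≠ 0) (hG : G = (n : ℝ)⁻¹ • (Hᵀ * H))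
    (hGdet : IsUnit G.det) : (Hᵀ * H)⁻¹ = (n : ℝ)⁻¹ • G⁻¹ := by
  have hn' : (n : ℝ) ≠ 0 := Nat.cast_ne_zero.2 hn
  rw [transpose_mul_self_eq_smul hn hG]
  exact inv_eq_left_inv (by
    rw [smul_mul_smul_comm, inv_mul_cancel₀ hn', one_smul, nonsing_inv_mul _ hGdet])

theorem isUnit_det_transpose_mul_self (hn : n ≠ 0) (hG : G = (n : ℝ)⁻¹ • (Hᵀ * H))
    (hGdet : IsUnit G.det) : IsUnit (Hᵀ * H).det := by
  have hn' : (n : ℝ) ≠ 0 := Nat.cast_ne_zero.2 hn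
  rw [transpose_mul_self_eq_smul hn hG, det_smul]
  exact ((Ne.isUnit hn').pow _).mul hGdet

theorem smul_mul_inv_mul_transpose_eq_hatMatrix (hn : n ≠ 0)
    (hG : G = (n : ℝ)⁻¹ • (Hᵀ * H)) (hGdet : IsUnit G.det) :
    (n : ℝ)⁻¹ • (H * G⁻¹ * Hᵀ) = hatMatrix H := by
  rw [hatMatrix, inv_transpose_mul_self_eq hn hG hGdet, Matrix.mul_smul, Matrix.smul_mul]

theorem transpose_mulVec_one_eq_smul (hn : n ≠ 0) {p : Fin m → ℝ}
    (hp : p = (n : ℝ)⁻¹ • (Hᵀ *ᵥ 1)) : Hᵀ *ᵥ 1 = (n : ℝ) • p := by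
  rw [hp, smul_smul, mul_inv_cancel₀ (Nat.cast_ne_zero.2 hn), one_smul]

theorem one_dotProduct_hatMatrix_mulVec (hn : n ≠ 0) (hG : G = (n : ℝ)⁻¹ • (Hᵀ * H))
    (hGdet : IsUnit G.det) {p : Fin m → ℝ} (hp : p = (n : ℝ)⁻¹ • (Hᵀ *ᵥ 1)) (x : Fin n → ℝ) :
    1 ⬝ᵥ (hatMatrix H *ᵥ x) = p ⬝ᵥ (G⁻¹ *ᵥ (Hᵀ *ᵥ x)) := by
  rw [dotProduct_hatMatrix_mulVec, transpose_mulVec_one_eq_smul hn hp,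
    inv_transpose_mul_self_eq hn hG hGdet, smul_mulVec, smul_dotProduct, dotProduct_smul,
    smul_smul, mul_inv_cancel₀ (Nat.cast_ne_zero.2 hn), one_smul]

theorem one_dotProduct_one_sub_hatMatrix_mulVec_one (hn : n ≠ 0)
    (hG : G = (n : ℝ)⁻¹ • (Hᵀ * H)) (hGdet : IsUnit G.det) {p : Fin m → ℝ}
    (hp : p = (n : ℝ)⁻¹ • (Hᵀ *ᵥ 1)) :
    1 ⬝ᵥ ((1 - hatMatrix H) *ᵥ 1) = n * (1 - p ⬝ᵥ (G⁻¹ *ᵥ p)) := by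
  rw [sub_mulVec, one_mulVec, dotProduct_sub, one_dotProduct_hatMatrix_mulVec hn hG hGdet hp,
    transpose_mulVec_one_eq_smul hn hp, mulVec_smul, dotProduct_smul, one_dotProduct]
  simp only [Pi.one_apply, Finset.sum_const, Finset.card_univ, Fintype.card_fin, nsmul_eq_mul,
    mul_one, smul_eq_mul]
  ring

theorem intercept_mul_eq (hn : n ≠ 0) (hG : G = (n : ℝ)⁻¹ • (Hᵀ * H)) (hGdet : IsUnit G.det)
    {p : Fin m → ℝ} (hp : p = (n : ℝ)⁻¹ • (Hᵀ *ᵥ 1)) (hden : p ⬝ᵥ (G⁻¹ *ᵥ p) < 1)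
    {y : Fin n → ℝ} {μh : ℝ}
    (hμh : μh = ((n : ℝ)⁻¹ * ∑ i, y i - ((n : ℝ)⁻¹ • (Hᵀ *ᵥ y)) ⬝ᵥ (G⁻¹ *ᵥ p)) /
      (1 - p ⬝ᵥ (G⁻¹ *ᵥ p))) :
    μh * (1 ⬝ᵥ ((1 - hatMatrix H) *ᵥ 1)) = 1 ⬝ᵥ ((1 - hatMatrix H) *ᵥ y) := by
  have hGinv : G⁻¹.IsSymm := by
    refine IsSymm.inv ?_
    rw [hG, IsSymm, transpose_smul, transpose_mul, transpose_transpose]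
  have hden' : 1 - p ⬝ᵥ (G⁻¹ *ᵥ p) ≠ 0 := by linarith
  rw [one_dotProduct_one_sub_hatMatrix_mulVec_one hn hG hGdet hp, hμh, sub_mulVec, one_mulVec,
    dotProduct_sub, one_dotProduct_hatMatrix_mulVec hn hG hGdet hp, one_dotProduct,
    smul_dotProduct, hGinv.dotProduct_mulVec_comm, smul_eq_mul]
  field_simp

theorem residual_quadForm_le_dotProduct_self (hn : n ≠ 0) (hG : G = (n : ℝ)⁻¹ • (Hᵀ * H))
    (hGdet : IsUnit G.det) {p : Fin m → ℝ} (hp : p = (n : ℝ)⁻¹ • (Hᵀ *ᵥ 1))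
    (hden : p ⬝ᵥ (G⁻¹ *ᵥ p) < 1) {y e : Fin n → ℝ} {μ : ℝ} {β : Fin m → ℝ}
    (hy : y = μ • 1 + H *ᵥ β + e) {μh : ℝ}
    (hμh : μh = ((n : ℝ)⁻¹ * ∑ i, y i - ((n : ℝ)⁻¹ • (Hᵀ *ᵥ y)) ⬝ᵥ (G⁻¹ *ᵥ p)) /
      (1 - p ⬝ᵥ (G⁻¹ *ᵥ p))) :
    (y - μh • 1) ⬝ᵥ ((1 - hatMatrix H) *ᵥ (y - μh • 1)) ≤ e ⬝ᵥ e := by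
  have hH := isUnit_det_transpose_mul_self hn hG hGdet
  have hM : (1 - hatMatrix H).IsSymm := isSymm_one.sub (isSymm_hatMatrix H)
  have hA : 0 ≤ 1 ⬝ᵥ ((1 - hatMatrix H) *ᵥ 1) := by
    rw [one_dotProduct_one_sub_hatMatrix_mulVec_one hn hG hGdet hp]
    exact mul_nonneg n.cast_nonneg (by linarith)
  have hyμ : y - μ • 1 = H *ᵥ β + e := by rw [hy]; abel
  calc (y - μh • 1) ⬝ᵥ ((1 - hatMatrix H) *ᵥ (y - μh • 1))
      ≤ (y - μ • 1) ⬝ᵥ ((1 - hatMatrix H) *ᵥ (y - μ • 1)) :=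
        dotProduct_sub_smul_mulVec_sub_smul_le hM hA (intercept_mul_eq hn hG hGdet hp hden hμh) μ
    _ = e ⬝ᵥ ((1 - hatMatrix H) *ᵥ e) := by
        rw [hyμ, mulVec_add, one_sub_hatMatrix_mulVec_mulVec hH, zero_add, add_dotProduct,
          hM.dotProduct_mulVec_comm (H *ᵥ β), one_sub_hatMatrix_mulVec_mulVec hH,
          dotProduct_zero, zero_add]
    _ ≤ e ⬝ᵥ e := dotProduct_one_sub_hatMatrix_mulVec_self_le hH e

end Intercept

section Sampling

variable {S Ω : Type*} [MeasurableSpace S] [MeasurableSpace Ω] {P : Measure S} [NeZero P]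
  {Q : Measure Ω} {g : S → ℝ}

theorem integrable_comp_of_map_eq {X : Ω → S} (hX : Q.map X = P) (hg : Integrable g P) :
    Integrable (fun ω => g (X ω)) Q := by
  have hXm : AEMeasurable X Q := .of_map_ne_zero (hX ▸ NeZero.ne P)
  rw [← hX] at hg
  exact (integrable_map_measure hg.aestronglyMeasurable hXm).mp hg

theorem integral_comp_of_map_eq {X : Ω → S} (hX : Q.map X = P)
    (hg : AEStronglyMeasurable g P) : ∫ ω, g (X ω) ∂Q = ∫ x, g x ∂P := by
  have hXm : AEMeasurable X Q := .of_map_ne_zero (hX ▸ NeZero.ne P)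
  rw [← hX] at hg ⊢
  exact (integral_map hXm hg).symm

variable {n : ℕ} {X : Fin n → Ω → S}

theorem integrable_empiricalMean (hX : ∀ i, Q.map (X i) = P) (hg : Integrable g P) :
    Integrable (fun ω => (n : ℝ)⁻¹ * ∑ i, g (X i ω)) Q :=
  (integrable_finsetSum _ fun i _ => integrable_comp_of_map_eq (hX i) hg).const_mul _

theorem integral_empiricalMean (hn : n ≠ 0) (hX : ∀ i, Q.map (X i) = P)
    (hg : Integrable g P) : ∫ ω, (n : ℝ)⁻¹ * ∑ i, g (X i ω) ∂Q = ∫ x, g x ∂P := by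
  rw [integral_const_mul, integral_finsetSum _ fun i _ => integrable_comp_of_map_eq (hX i) hg]
  simp only [integral_comp_of_map_eq (hX _) hg.aestronglyMeasurable, Finset.sum_const,
    Finset.card_univ, Fintype.card_fin, nsmul_eq_mul]
  exact inv_mul_cancel_left₀ (Nat.cast_ne_zero.2 hn) _

end Sampling

theorem stmt6_general {S Ω : Type*} [MeasurableSpace S] [MeasurableSpace Ω]
    (P : Measure S) [IsProbabilityMeasure P] (Q : Measure Ω)
    {n m : ℕ} (hn : 0 < n)
    (h : Fin m → S → ℝ) (ε : S → ℝ) (μ : ℝ) (β : Fin m → ℝ) (f : S → ℝ)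
    (hfdef : ∀ x, f x = μ + (∑ j, β j * h j x) + ε x)
    (hεL2 : MemLp ε 2 P)
    (X : Fin n → Ω → S)
    (hlaw : ∀ i, Measure.map (X i) Q = P)
    (Hm : Ω → Matrix (Fin n) (Fin m) ℝ) (hHm : ∀ ω i j, Hm ω i j = h j (X i ω))
    (G : Ω → Matrix (Fin m) (Fin m) ℝ) (hG : ∀ ω, G ω = (n : ℝ)⁻¹ • ((Hm ω)ᵀ * Hm ω))
    (hGdet : ∀ ω, IsUnit (G ω).det)
    (Pnh : Ω → Fin m → ℝ) (hPnh : ∀ ω j, Pnh ω j = (n : ℝ)⁻¹ * ∑ i, h j (X i ω))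
    (hden : ∀ ω, Pnh ω ⬝ᵥ ((G ω)⁻¹ *ᵥ Pnh ω) < 1)
    (μhat : Ω → ℝ)
    (hμhat : ∀ ω, μhat ω =
      ((n : ℝ)⁻¹ * ∑ i, f (X i ω) -
          (fun j => (n : ℝ)⁻¹ * ∑ i, f (X i ω) * h j (X i ω)) ⬝ᵥ ((G ω)⁻¹ *ᵥ Pnh ω)) /
        (1 - Pnh ω ⬝ᵥ ((G ω)⁻¹ *ᵥ Pnh ω)))
    (σhat : Ω → ℝ)
    (hσhat : ∀ ω, σhat ω = (n : ℝ)⁻¹ *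
      ((fun i => f (X i ω) - μhat ω) ⬝ᵥ
        ((1 - (n : ℝ)⁻¹ • (Hm ω * (G ω)⁻¹ * (Hm ω)ᵀ)) *ᵥ fun i => f (X i ω) - μhat ω)))
    (hint : Integrable σhat Q) :
    (∀ ω, σhat ω ≤ (n : ℝ)⁻¹ * ∑ i, ε (X i ω) ^ 2) ∧
      ∫ ω, σhat ω ∂Q ≤ ∫ x, ε x ^ 2 ∂P := by
  have hpt (ω : Ω) : σhat ω ≤ (n : ℝ)⁻¹ * ∑ i, ε (X i ω) ^ 2 := by
    have hy : (fun i => f (X i ω)) = μ • 1 + Hm ω *ᵥ β + fun i => ε (X i ω) := by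
      ext i; simp [hfdef, mulVec, dotProduct, hHm, mul_comm]
    have hp : Pnh ω = (n : ℝ)⁻¹ • ((Hm ω)ᵀ *ᵥ 1) := by
      ext j; simp [hPnh, mulVec, dotProduct, hHm]
    have hw : (fun j => (n : ℝ)⁻¹ * ∑ i, f (X i ω) * h j (X i ω)) =
        (n : ℝ)⁻¹ • ((Hm ω)ᵀ *ᵥ fun i => f (X i ω)) := by
      ext j; simp [mulVec, dotProduct, hHm, mul_comm]
    have hres : (fun i => f (X i ω) - μhat ω) = (fun i => f (X i ω)) - μhat ω • 1 := by
      ext i; simp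
    rw [hσhat ω, smul_mul_inv_mul_transpose_eq_hatMatrix hn.ne' (hG ω) (hGdet ω), hres]
    refine mul_le_mul_of_nonneg_left ?_ (by positivity)
    refine (residual_quadForm_le_dotProduct_self hn.ne' (hG ω) (hGdet ω) hp (hden ω) hy
      (hw ▸ hμhat ω)).trans_eq ?_
    simp [dotProduct, sq]
  have hε2 : Integrable (fun x => ε x ^ 2) P := hεL2.integrable_sq
  refine ⟨hpt, ?_⟩
  calc ∫ ω, σhat ω ∂Q ≤ ∫ ω, (n : ℝ)⁻¹ * ∑ i, ε (X i ω) ^ 2 ∂Q :=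
        integral_mono hint (integrable_empiricalMean hlaw hε2) hpt
    _ = ∫ x, ε x ^ 2 ∂P := integral_empiricalMean hn.ne' hlaw hε2

/-- The variance estimator is bounded by the empirical error variance:
`σ̂² ≤ P_n(ε²)` pointwise, and, when the `X_i` are iid from `P` and `ε` is centered
under `P`, the estimator has nonpositive bias: `E[σ̂²] ≤ P(ε²)`. -/
theorem stmt6 {S Ω : Type*} [MeasurableSpace S] [MeasurableSpace Ω]
    (P : Measure S) [IsProbabilityMeasure P] (Q : Measure Ω) [IsProbabilityMeasure Q]
    {n m : ℕ} (hn : 0 < n)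
    (h : Fin m → S → ℝ) (ε : S → ℝ) (μ : ℝ) (β : Fin m → ℝ) (f : S → ℝ)
    (hfdef : ∀ x, f x = μ + (∑ j, β j * h j x) + ε x)
    (hεmeas : Measurable ε) (hεL2 : MemLp ε 2 P)
    (hεmean : ∫ x, ε x ∂P = 0) (hhε : ∀ j, ∫ x, h j x * ε x ∂P = 0)
    (X : Fin n → Ω → S) (hXmeas : ∀ i, Measurable (X i))
    (hlaw : ∀ i, Measure.map (X i) Q = P)
    (hindep : ProbabilityTheory.iIndepFun X Q)
    (Hm : Ω → Matrix (Fin n) (Fin m) ℝ) (hHm : ∀ ω i j, Hm ω i j = h j (X i ω))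
    (G : Ω → Matrix (Fin m) (Fin m) ℝ) (hG : ∀ ω, G ω = (n : ℝ)⁻¹ • ((Hm ω)ᵀ * Hm ω))
    (hGdet : ∀ ω, IsUnit (G ω).det)
    (Pnh : Ω → Fin m → ℝ) (hPnh : ∀ ω j, Pnh ω j = (n : ℝ)⁻¹ * ∑ i, h j (X i ω))
    (hden : ∀ ω, Pnh ω ⬝ᵥ ((G ω)⁻¹ *ᵥ Pnh ω) < 1)
    (μhat : Ω → ℝ)
    (hμhat : ∀ ω, μhat ω =
      ((n : ℝ)⁻¹ * ∑ i, f (X i ω) -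
          (fun j => (n : ℝ)⁻¹ * ∑ i, f (X i ω) * h j (X i ω)) ⬝ᵥ ((G ω)⁻¹ *ᵥ Pnh ω)) /
        (1 - Pnh ω ⬝ᵥ ((G ω)⁻¹ *ᵥ Pnh ω)))
    (σhat : Ω → ℝ)
    (hσhat : ∀ ω, σhat ω = (n : ℝ)⁻¹ *
      ((fun i => f (X i ω) - μhat ω) ⬝ᵥ
        ((1 - (n : ℝ)⁻¹ • (Hm ω * (G ω)⁻¹ * (Hm ω)ᵀ)) *ᵥ fun i => f (X i ω) - μhat ω)))
    (hint : Integrable σhat Q) :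
    (∀ ω, σhat ω ≤ (n : ℝ)⁻¹ * ∑ i, ε (X i ω) ^ 2) ∧
      ∫ ω, σhat ω ∂Q ≤ ∫ x, ε x ^ 2 ∂P :=
  stmt6_general P Q hn h ε μ β f hfdef hεL2 X hlaw Hm hHm G hG hGdet Pnh hPnh hden μhat hμhat σhat
    hσhat hint
end

section
/- Lindeberg-type uniform bound for badly approximable numbers: let u ∈ (0,1) be such that |u − p/q| > c/q² for all integers p and q ≥ 1 and some c > 0. With a = ℓ/k ≤ u < (ℓ+1)/k = b, the standardized projection error ε/σ of f = 1_{[u,1]} (with ε = f minus its piecewise-constant L² projection on the grid of mesh 1/k, and σ² = k(b−u)(u−a)) satisfies sup_{x∈[0,1]} ε(x)²/σ² ≤ k²/c. -/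
/-- Lindeberg-type uniform bound for badly approximable numbers: if
`|u − p/q| > c/q²` for all integers `p` and `q ≥ 1`, then the standardized projection
error of `f = 1_{[u,1]}` on the grid of mesh `1/k` satisfies
`sup_{x ∈ [0,1]} ε(x)²/σ² ≤ k²/c`. -/
theorem stmt19 (u c : ℝ) (hu : u ∈ Set.Ioo (0 : ℝ) 1) (hc : 0 < c)
    (hbad : ∀ (p : ℤ) (q : ℕ), 1 ≤ q → c / (q : ℝ) ^ 2 < |u - (p : ℝ) / q|)
    (k : ℕ) (hk : 0 < k) (ℓ : ℕ) (hℓ : ℓ < k)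
    (ha : (ℓ : ℝ) / k ≤ u) (hb : u < ((ℓ : ℝ) + 1) / k)
    (ε : ℝ → ℝ)
    (hε : ∀ x, ε x = if (ℓ : ℝ) / k ≤ x ∧ x < u then -(k * (((ℓ : ℝ) + 1) / k - u))
      else if u ≤ x ∧ x < ((ℓ : ℝ) + 1) / k then 1 - k * (((ℓ : ℝ) + 1) / k - u) else 0)
    (σ2 : ℝ) (hσ2 : σ2 = k * (((ℓ : ℝ) + 1) / k - u) * (u - (ℓ : ℝ) / k)) :
    ∀ x ∈ Set.Icc (0 : ℝ) 1, ε x ^ 2 / σ2 ≤ (k : ℝ) ^ 2 / c := by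
  intro x hx
  have hk' : (0 : ℝ) < k := by exact_mod_cast hk
  set t : ℝ := ((ℓ : ℝ) + 1) / k - u with hT
  set s : ℝ := u - (ℓ : ℝ) / k with hS
  have hs : c / (k : ℝ) ^ 2 < s := by
    have h := hbad ℓ k hk
    rwa [show ((ℓ : ℤ) : ℝ) = (ℓ : ℝ) by push_cast; ring,
      abs_of_nonneg (sub_nonneg.2 ha)] at h
  have ht : c / (k : ℝ) ^ 2 < t := by
    have h := hbad (ℓ + 1) k hk
    rw [show (((ℓ : ℤ) + 1 : ℤ) : ℝ) = (ℓ : ℝ) + 1 by push_cast; ring] at h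
    rwa [abs_sub_comm, abs_of_nonneg (sub_nonneg.2 hb.le)] at h
  have hcpos : 0 < c / (k : ℝ) ^ 2 := by positivity
  have hspos : 0 < s := lt_trans hcpos hs
  have htpos : 0 < t := lt_trans hcpos ht
  have ht1 : t ≤ 1 / k := by
    rw [hT]
    have : (ℓ : ℝ) / k + 1 / k = ((ℓ : ℝ) + 1) / k := by ring
    linarith
  have hs1 : s ≤ 1 / k := by
    rw [hS]
    have : (ℓ : ℝ) / k + 1 / k = ((ℓ : ℝ) + 1) / k := by ring
    linarith
  have hσpos : 0 < σ2 := by rw [hσ2]; positivity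
  have hcs : c / (k : ℝ) ^ 2 * k < s * k := by
    exact mul_lt_mul_of_pos_right hs hk'
  have hct : c / (k : ℝ) ^ 2 * k < t * k := by
    exact mul_lt_mul_of_pos_right ht hk'
  have hck : c / (k : ℝ) ^ 2 * k = c / k := by field_simp
  -- key: c * t ≤ k * s  and  c * s ≤ k * t
  have key1 : c * t ≤ (k : ℝ) * s := by
    have h1 : c * t ≤ c * (1 / k) := mul_le_mul_of_nonneg_left ht1 hc.le
    have h2 : c / k < k * s := by rw [← hck]; linarith [hcs]
    have heq : c * (1 / k) = c / k := by ring
    exact ((h1.trans_eq heq).trans_lt h2).le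
  have key2 : c * s ≤ (k : ℝ) * t := by
    have h1 : c * s ≤ c * (1 / k) := mul_le_mul_of_nonneg_left hs1 hc.le
    have h2 : c / k < k * t := by rw [← hck]; linarith [hct]
    have heq : c * (1 / k) = c / k := by ring
    exact ((h1.trans_eq heq).trans_lt h2).le
  rw [div_le_div_iff₀ hσpos hc, hε x, hσ2]
  split_ifs with h1 h2
  · -- ε = -(k t)
    have : (-(↑k * t)) ^ 2 * c = (k : ℝ) ^ 2 * t * (c * t) := by ring
    rw [this]
    have : (k : ℝ) ^ 2 * ((k : ℝ) * t * s) = (k : ℝ) ^ 2 * t * ((k : ℝ) * s) := by ring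
    rw [this]
    exact mul_le_mul_of_nonneg_left key1 (by positivity)
  · -- ε = 1 - k t = k s
    have hks : 1 - (k : ℝ) * t = (k : ℝ) * s := by
      rw [hT, hS]; field_simp; ring
    rw [hks]
    have : ((k : ℝ) * s) ^ 2 * c = (k : ℝ) ^ 2 * s * (c * s) := by ring
    rw [this]
    have : (k : ℝ) ^ 2 * ((k : ℝ) * t * s) = (k : ℝ) ^ 2 * s * ((k : ℝ) * t) := by ring
    rw [this]
    exact mul_le_mul_of_nonneg_left key2 (by positivity)
  · have : (0 : ℝ) ^ 2 * c = 0 := by ring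
    rw [this]
    positivity
end
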